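/- For |q|<1 and parameters in the region of validity, ₂φ₁ satisfies the contiguous relation ₂φ₁(aq, b; cq; q, x) = [(1−b)(c−abx)/(c−b)] · ₂φ₁(aq, bq; cq; q, x) − [b(1−c)/(c−b)] · ₂φ₁(a, b; c; q, x). -/

import Mathlib

/-!
Every term is a rational function of `q ^ (j + 1)` times the `j`-th term `u j` of
`₂φ₁(aq, bq; cq)`: the `(j + 1)`-st terms of `₂φ₁(aq, b; cq)`, `₂φ₁(aq, bq; cq)` and
`₂φ₁(a, b; c)` are `u j` times `(1-b)(1-aQ)x / ((1-Q)(1-cQ))`, `(1-aQ)(1-bQ)x / ((1-Q)(1-cQ))` and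
`(1-a)(1-b)x / ((1-Q)(1-c))`, with `Q = q ^ (j + 1)`. Hence the relation, multiplied by `c - b`,
holds coefficient by coefficient, the term `a b x ₂φ₁(aq, bq; cq)` contributing `a b x u j`.
All series converge because `(a;q)ₙ` and `1/(c;q)ₙ` stay bounded: both are partial products
`∏ (1 + fᵢ)` with `∑ ‖fᵢ‖ < ∞`.
-/
open scoped BigOperators

/-- q-shifted factorial (a;q)_j -/
noncomputable def qPoch (a q : ℂ) (j : ℕ) : ℂ :=
  ∏ i ∈ Finset.range j, (1 - a * q ^ i)

/-- infinite q-shifted factorial (a;q)_∞ -/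
noncomputable def qPochInf (a q : ℂ) : ℂ :=
  ∏' j : ℕ, (1 - a * q ^ j)

/-- basic hypergeometric series ₁φ₁(a; c; q, x) -/
noncomputable def phi11 (a c q x : ℂ) : ℂ :=
  ∑' j : ℕ, qPoch a q j / (qPoch q q j * qPoch c q j) *
    (-1) ^ j * q ^ (j * (j - 1) / 2) * x ^ j

/-- basic hypergeometric series ₀φ₁(–; c; q, x) -/
noncomputable def phi01 (c q x : ℂ) : ℂ :=
  ∑' j : ℕ, q ^ (j * (j - 1)) * x ^ j / (qPoch q q j * qPoch c q j)

/-- basic hypergeometric series ₂φ₁(a, b; c; q, x) -/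
noncomputable def phi21 (a b c q x : ℂ) : ℂ :=
  ∑' j : ℕ, qPoch a q j * qPoch b q j / (qPoch q q j * qPoch c q j) * x ^ j

open Filter Topology Asymptotics

lemma norm_prod_one_add_le_exp_tsum {ι R : Type*} [NormedCommRing R] [NormOneClass R]
    {f : ι → R} (hf : Summable fun i ↦ ‖f i‖) (s : Finset ι) :
    ‖∏ i ∈ s, (1 + f i)‖ ≤ Real.exp (∑' i, ‖f i‖) := by
  calc ‖∏ i ∈ s, (1 + f i)‖ ≤ ‖∏ i ∈ s, (1 + f i) - 1‖ + 1 := by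
        simpa using norm_le_norm_sub_add (∏ i ∈ s, (1 + f i)) 1
    _ ≤ Real.exp (∑ i ∈ s, ‖f i‖) := by linarith [s.norm_prod_one_add_sub_one_le f]
    _ ≤ Real.exp (∑' i, ‖f i‖) :=
        Real.exp_le_exp.mpr (hf.sum_le_tsum s fun i _ ↦ norm_nonneg _)

lemma qPoch_succ (a q : ℂ) (j : ℕ) : qPoch a q (j + 1) = qPoch a q j * (1 - a * q ^ j) :=
  Finset.prod_range_succ _ _

lemma qPoch_succ' (a q : ℂ) (j : ℕ) : qPoch a q (j + 1) = (1 - a) * qPoch (a * q) q j := by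
  simp only [qPoch, Finset.prod_range_succ', pow_zero, mul_one, mul_assoc, ← pow_succ']
  ring

lemma exists_norm_qPoch_le (a : ℂ) {q : ℂ} (hq : ‖q‖ < 1) :
    ∃ C, ∀ n, ‖qPoch a q n‖ ≤ C := by
  have hf : Summable fun i ↦ ‖-(a * q ^ i)‖ := by
    simpa using (summable_geometric_of_lt_one (norm_nonneg q) hq).mul_left ‖a‖
  exact ⟨_, fun n ↦ by
    simpa [qPoch, sub_eq_add_neg] using norm_prod_one_add_le_exp_tsum hf (Finset.range n)⟩

lemma exists_norm_inv_qPoch_le {c q : ℂ} (hq : ‖q‖ < 1) (hc : ∀ n : ℕ, c * q ^ n ≠ 1) :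
    ∃ C, ∀ n, ‖(qPoch c q n)⁻¹‖ ≤ C := by
  have hcq : Tendsto (fun n : ℕ ↦ c * q ^ n) atTop (𝓝 0) := by
    simpa using (tendsto_pow_atTop_nhds_zero_of_norm_lt_one hq).const_mul c
  have hinv : Tendsto (fun n : ℕ ↦ (1 - c * q ^ n)⁻¹) atTop (𝓝 1) := by
    simpa using ((tendsto_const_nhds (x := (1 : ℂ))).sub hcq).inv₀ (by simp)
  have hf : Summable fun n : ℕ ↦ ‖c * q ^ n * (1 - c * q ^ n)⁻¹‖ := by
    refine summable_of_isBigO_nat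
      ((summable_geometric_of_lt_one (norm_nonneg q) hq).mul_left ‖c‖) ?_
    have := ((isBigO_refl (fun n : ℕ ↦ c * q ^ n) atTop).mul (hinv.isBigO_one ℂ)).norm_norm
    simpa [norm_pow] using this
  refine ⟨Real.exp (∑' i, ‖c * q ^ i * (1 - c * q ^ i)⁻¹‖), fun n ↦ ?_⟩
  have hprod :
      (qPoch c q n)⁻¹ = ∏ i ∈ Finset.range n, (1 + c * q ^ i * (1 - c * q ^ i)⁻¹) := by
    rw [qPoch, ← Finset.prod_inv_distrib]
    refine Finset.prod_congr rfl fun i _ ↦ ?_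
    have : 1 - c * q ^ i ≠ 0 := sub_ne_zero.mpr (hc i).symm
    field_simp
    ring
  exact hprod ▸ norm_prod_one_add_le_exp_tsum hf (Finset.range n)

lemma pow_succ_ne_one_of_norm_lt_one {q : ℂ} (hq : ‖q‖ < 1) (n : ℕ) : q ^ (n + 1) ≠ 1 := by
  intro h
  simpa [← norm_pow, h] using pow_lt_one₀ (norm_nonneg q) hq n.succ_ne_zero

noncomputable def phi21Term (a b c q x : ℂ) (j : ℕ) : ℂ :=
  qPoch a q j * qPoch b q j / (qPoch q q j * qPoch c q j) * x ^ j

lemma phi21Term_zero (a b c q x : ℂ) : phi21Term a b c q x 0 = 1 := by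
  simp [phi21Term, qPoch]

lemma summable_phi21Term (a b : ℂ) {c q x : ℂ} (hq : ‖q‖ < 1) (hx : ‖x‖ < 1)
    (hc : ∀ n : ℕ, c * q ^ n ≠ 1) : Summable (phi21Term a b c q x) := by
  obtain ⟨A, hA⟩ := exists_norm_qPoch_le a hq
  obtain ⟨B, hB⟩ := exists_norm_qPoch_le b hq
  obtain ⟨P, hP⟩ := exists_norm_inv_qPoch_le hq fun n ↦ by
    rw [← pow_succ']; exact pow_succ_ne_one_of_norm_lt_one hq n
  obtain ⟨C, hC⟩ := exists_norm_inv_qPoch_le hq hc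
  refine .of_norm_bounded ((summable_geometric_of_lt_one (norm_nonneg x) hx).mul_left
    (A * B * (P * C))) fun j ↦ ?_
  rw [phi21Term, div_eq_mul_inv, mul_inv]
  simp only [norm_mul, norm_pow]
  have hA0 : 0 ≤ A := (norm_nonneg _).trans (hA 0)
  have hB0 : 0 ≤ B := (norm_nonneg _).trans (hB 0)
  have hP0 : 0 ≤ P := (norm_nonneg _).trans (hP 0)
  have hC0 : 0 ≤ C := (norm_nonneg _).trans (hC 0)
  gcongr
  exacts [hA j, hB j, hP j, hC j]

lemma phi21Term_contiguous (a b c q x : ℂ) (j : ℕ) (hq : q ^ (j + 1) ≠ 1) (hc : c ≠ 1)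
    (hcq : c * q ^ (j + 1) ≠ 1) :
    (c - b) * phi21Term (a * q) b (c * q) q x (j + 1)
      = (1 - b) * (c * phi21Term (a * q) (b * q) (c * q) q x (j + 1)
          - a * b * x * phi21Term (a * q) (b * q) (c * q) q x j)
        - b * (1 - c) * phi21Term a b c q x (j + 1) := by
  set u := phi21Term (a * q) (b * q) (c * q) q x j
  have hv : phi21Term (a * q) b (c * q) q x (j + 1)
      = u * ((1 - b) * (1 - a * q ^ (j + 1)) * x
          / ((1 - q ^ (j + 1)) * (1 - c * q ^ (j + 1)))) := by
    simp only [u, phi21Term, qPoch_succ (a * q), qPoch_succ' b, qPoch_succ q,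
      qPoch_succ (c * q), div_eq_mul_inv, mul_inv]
    ring
  have hu : phi21Term (a * q) (b * q) (c * q) q x (j + 1)
      = u * ((1 - a * q ^ (j + 1)) * (1 - b * q ^ (j + 1)) * x
          / ((1 - q ^ (j + 1)) * (1 - c * q ^ (j + 1)))) := by
    simp only [u, phi21Term, qPoch_succ (a * q), qPoch_succ (b * q), qPoch_succ q,
      qPoch_succ (c * q), div_eq_mul_inv, mul_inv]
    ring
  have hw : phi21Term a b c q x (j + 1)
      = u * ((1 - a) * (1 - b) * x / ((1 - q ^ (j + 1)) * (1 - c))) := by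
    simp only [u, phi21Term, qPoch_succ' a, qPoch_succ' b, qPoch_succ q, qPoch_succ' c,
      div_eq_mul_inv, mul_inv]
    ring
  have h1 : 1 - q ^ (j + 1) ≠ 0 := sub_ne_zero.mpr hq.symm
  have h2 : 1 - c ≠ 0 := sub_ne_zero.mpr hc.symm
  have h3 : 1 - c * q ^ (j + 1) ≠ 0 := sub_ne_zero.mpr hcq.symm
  rw [hv, hu, hw]
  field_simp
  ring

theorem phi21_contiguous_mul (a b : ℂ) {c q x : ℂ} (hq : ‖q‖ < 1) (hx : ‖x‖ < 1)
    (hc : ∀ n : ℕ, c * q ^ n ≠ 1) :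
    (c - b) * phi21 (a * q) b (c * q) q x
      = (1 - b) * (c - a * b * x) * phi21 (a * q) (b * q) (c * q) q x
        - b * (1 - c) * phi21 a b c q x := by
  have hcq : ∀ n : ℕ, c * q * q ^ n ≠ 1 := fun n ↦ by rw [mul_assoc, ← pow_succ']; exact hc _
  have hv : HasSum _ (phi21 (a * q) b (c * q) q x) :=
    (summable_phi21Term (a * q) b hq hx hcq).hasSum
  have hu : HasSum _ (phi21 (a * q) (b * q) (c * q) q x) :=
    (summable_phi21Term (a * q) (b * q) hq hx hcq).hasSum
  have hw : HasSum _ (phi21 a b c q x) := (summable_phi21Term a b hq hx hc).hasSum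
  have hv₁ := (hasSum_nat_add_iff' 1).mpr hv
  have hu₁ := (hasSum_nat_add_iff' 1).mpr hu
  have hw₁ := (hasSum_nat_add_iff' 1).mpr hw
  simp only [Finset.range_one, Finset.sum_singleton, phi21Term_zero] at hv₁ hu₁ hw₁
  have hrhs := (((hu₁.mul_left c).sub (hu.mul_left (a * b * x))).mul_left (1 - b)).sub
    (hw₁.mul_left (b * (1 - c)))
  rw [← funext fun j ↦ phi21Term_contiguous a b c q x j (pow_succ_ne_one_of_norm_lt_one hq j)
    (by simpa using hc 0) (hc (j + 1))] at hrhs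
  linear_combination (hv₁.mul_left (c - b)).unique hrhs

theorem phi21_contiguous_relation (q a b c x : ℂ) (hq : ‖q‖ < 1) (hx : ‖x‖ < 1)
    (hc : ∀ n : ℕ, c * q ^ n ≠ 1) (hbc : b ≠ c) :
    phi21 (a * q) b (c * q) q x
      = (1 - b) * (c - a * b * x) / (c - b) * phi21 (a * q) (b * q) (c * q) q x
        - b * (1 - c) / (c - b) * phi21 a b c q x := by
  have hcb : c - b ≠ 0 := sub_ne_zero.mpr hbc.symm
  rw [div_mul_eq_mul_div, div_mul_eq_mul_div, div_sub_div_same, eq_div_iff hcb]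
  linear_combination phi21_contiguous_mul a b hq hx hc
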